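/- The identity compound optic: given a bicategory B, pseudofunctors F, G from B to Cat, a 0-cell i and objects a : F i, b : G i, the class of ⟨𝟙 i, (F.mapId i).inv.app a, (G.mapId i).hom.app b⟩ in O_{i,i}⟨a,b⟩⟨a,b⟩ is a two-sided identity for the composition of compound optics: composing any compound optic in O_{i,j}⟨a,b⟩⟨s,t⟩ with it on either side (at i or at j) returns the same optic. -/

import Mathlib

/-
An invertible 2-cell `α : m ≅ m'` lets one move a representative `⟨m, f, g⟩` of an optic to
`⟨m', f ≫ F α, G α⁻¹ ≫ g⟩` without changing its class: the generating relation for `α.hom` does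
this up to `G α ≫ G α⁻¹ = 𝟙`. Composing `⟨m, f, g⟩` with an identity optic, on either side,
yields exactly such a transport along the unitor `λ_ m` or `ρ_ m`, because the unitor coherence
of a pseudofunctor expresses `F (λ_ m)` and `F (ρ_ m)` through `F.mapId` and `F.mapComp`.
-/

open CategoryTheory

universe w₁ v₁ u₁ v u

variable {B : Type u} [Bicategory.{w₁, v} B]

section
variable (F G : Pseudofunctor B Cat.{v₁, u₁})

/-- Raw representatives of compound optics: a residual 1-cell `m : i ⟶ j`, a forward part
`s ⟶ (F.map m).obj a` and a backward part `(G.map m).obj b ⟶ t`. -/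
def COpticRaw {i j : B} (a : F.obj i) (b : G.obj i) (s : F.obj j) (t : G.obj j) : Type _ :=
  Σ m : i ⟶ j, (s ⟶ (F.map m).toFunctor.obj a) × ((G.map m).toFunctor.obj b ⟶ t)

/-- The generating relation of the coend over the hom-category `B(i,j)`: for a 2-cell
`φ : m ⟶ m'`, identify `⟨m', f ≫ (F.map₂ φ).app a, g⟩` with `⟨m, f, (G.map₂ φ).app b ≫ g⟩`. -/
inductive COpticRel {i j : B} (a : F.obj i) (b : G.obj i) (s : F.obj j) (t : G.obj j) :
    COpticRaw F G a b s t → COpticRaw F G a b s t → Prop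
  | mk {m m' : i ⟶ j} (φ : m ⟶ m') (f : s ⟶ (F.map m).toFunctor.obj a) (g : (G.map m').toFunctor.obj b ⟶ t) :
      COpticRel a b s t ⟨m', f ≫ (F.map₂ φ).toNatTrans.app a, g⟩ ⟨m, f, (G.map₂ φ).toNatTrans.app b ≫ g⟩

/-- Composition of raw compound optics, using the compositors of `F` and `G`. -/
def COpticRaw.comp {i j k : B} {a : F.obj i} {b : G.obj i} {s : F.obj j} {t : G.obj j}
    {u : F.obj k} {v : G.obj k} (x : COpticRaw F G a b s t) (y : COpticRaw F G s t u v) :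
    COpticRaw F G a b u v :=
  ⟨x.1 ≫ y.1,
   y.2.1 ≫ (F.map y.1).toFunctor.map x.2.1 ≫ (F.mapComp x.1 y.1).inv.toNatTrans.app a,
   (G.mapComp x.1 y.1).hom.toNatTrans.app b ≫ (G.map y.1).toFunctor.map x.2.2 ≫ y.2.2⟩

/-- The identity raw compound optic at `i`, built from the identity 1-cell `𝟙 i` and the
unitors of `F` and `G`. -/
def COpticRaw.id (i : B) (a : F.obj i) (b : G.obj i) : COpticRaw F G a b a b :=
  ⟨𝟙 i, (F.mapId i).inv.toNatTrans.app a, (G.mapId i).hom.toNatTrans.app b⟩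

end

open Bicategory

namespace COpticRaw

variable {F G : Pseudofunctor B Cat.{v₁, u₁}} {i j : B}
  {a : F.obj i} {b : G.obj i} {s : F.obj j} {t : G.obj j}

lemma quot_mk_eq_of_iso {m m' : i ⟶ j} (α : m ≅ m') (f : s ⟶ (F.map m).toFunctor.obj a)
    (g : (G.map m).toFunctor.obj b ⟶ t) :
    Quot.mk (COpticRel F G a b s t)
        ⟨m', f ≫ (F.map₂ α.hom).toNatTrans.app a, (G.map₂ α.inv).toNatTrans.app b ≫ g⟩ =
      Quot.mk _ ⟨m, f, g⟩ := by
  refine (Quot.sound (COpticRel.mk α.hom f _)).trans ?_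
  rw [← Category.assoc, ← Cat.Hom₂.comp_app, ← G.map₂_comp, α.hom_inv_id, G.map₂_id,
    Cat.Hom₂.id_app, Category.id_comp]
  rfl

lemma id_comp_mk (m : i ⟶ j) (f : s ⟶ (F.map m).toFunctor.obj a)
    (g : (G.map m).toFunctor.obj b ⟶ t) :
    comp F G (id F G i a b) ⟨m, f, g⟩ =
      ⟨𝟙 i ≫ m, f ≫ (F.map₂ (λ_ m).inv).toNatTrans.app a,
        (G.map₂ (λ_ m).hom).toNatTrans.app b ≫ g⟩ := by
  simp only [comp, id, F.whiskerRight_mapId_inv_app, G.whiskerRight_mapId_hom_app,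
    Category.assoc, Cat.Hom.hom_inv_id_toNatTrans_app_assoc, Cat.Hom.hom_inv_id_toNatTrans_app,
    Category.comp_id]
  rfl

lemma comp_id_mk (m : i ⟶ j) (f : s ⟶ (F.map m).toFunctor.obj a)
    (g : (G.map m).toFunctor.obj b ⟶ t) :
    comp F G ⟨m, f, g⟩ (id F G j s t) =
      ⟨m ≫ 𝟙 j, f ≫ (F.map₂ (ρ_ m).inv).toNatTrans.app a,
        (G.map₂ (ρ_ m).hom).toNatTrans.app b ≫ g⟩ := by
  simp only [comp, id]
  rw [← (F.mapId j).inv.toNatTrans.naturality_assoc, F.whiskerLeft_mapId_inv_app,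
    (G.mapId j).hom.toNatTrans.naturality, G.whiskerLeft_mapId_hom_app]
  simp only [Category.assoc, Cat.Hom.hom_inv_id_toNatTrans_app_assoc,
    Cat.Hom.hom_inv_id_toNatTrans_app, Category.comp_id]
  rfl

end COpticRaw

/-- The class of `⟨𝟙 i, (F.mapId i).inv.app a, (G.mapId i).hom.app b⟩` is a two-sided
identity for the composition of compound optics. -/
theorem coptic_id (F G : Pseudofunctor B Cat.{v₁, u₁}) (i j : B)
    (a : F.obj i) (b : G.obj i) (s : F.obj j) (t : G.obj j)
    (x : COpticRaw F G a b s t) :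
    Quot.mk (COpticRel F G a b s t) (COpticRaw.comp F G (COpticRaw.id F G i a b) x) =
        Quot.mk _ x ∧
    Quot.mk (COpticRel F G a b s t) (COpticRaw.comp F G x (COpticRaw.id F G j s t)) =
        Quot.mk _ x := by
  obtain ⟨m, f, g⟩ := x
  rw [COpticRaw.id_comp_mk, COpticRaw.comp_id_mk]
  exact ⟨COpticRaw.quot_mk_eq_of_iso (λ_ m).symm f g,
    COpticRaw.quot_mk_eq_of_iso (ρ_ m).symm f g⟩
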